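/- arXiv:1806.00915 — 3 statements merged into one kernel-verified Lean document; each statement's English description precedes it below -/
import Mathlib

section
/- Let d ≥ 3 and for every subset U of Fin d define ℙ[U] := (#U)^4 / d^4 (the outcome probability of the d-slit experiment in the theory of density hypercubes). Then for every three-element subset U of Fin d, ℙ[U] − ( Σ_{V ⊆ U, #V = 2} ℙ[V] − Σ_{V ⊆ U, #V = 1} ℙ[V] ) = 36 / d^4; in particular this difference is nonzero, so the theory of density hypercubes exhibits third-order interference. -/
open Finset

/-- For `d ≥ 3` and the probability rule `ℙ[U] = (#U)^4 / d^4` of the theory of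
density hypercubes, every three-element subset `U` of `Fin d` witnesses
third-order interference: the Sorkin difference equals `36 / d^4 ≠ 0`. -/
theorem density_hypercubes_third_order_interference
    (d : ℕ) (hd : 3 ≤ d) (P : Finset (Fin d) → ℝ)
    (hP : ∀ U : Finset (Fin d), P U = (U.card : ℝ) ^ 4 / (d : ℝ) ^ 4)
    (U : Finset (Fin d)) (hU : U.card = 3) :
    P U - ((∑ V ∈ U.powerset.filter (fun V => V.card = 2), P V) -
            (∑ V ∈ U.powerset.filter (fun V => V.card = 1), P V)) = 36 / (d : ℝ) ^ 4
    ∧ P U - ((∑ V ∈ U.powerset.filter (fun V => V.card = 2), P V) -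
            (∑ V ∈ U.powerset.filter (fun V => V.card = 1), P V)) ≠ 0 := by
  have hd0 : (d : ℝ) ^ 4 ≠ 0 := by positivity
  have h2 : (∑ V ∈ U.powerset.filter (fun V => V.card = 2), P V) = 48 / (d : ℝ) ^ 4 := by
    rw [Finset.sum_congr rfl (fun V hV => by
      rw [hP V, (Finset.mem_filter.mp hV).2]), Finset.sum_const,
      ← Finset.powersetCard_eq_filter, Finset.card_powersetCard, hU]
    norm_num; ring
  have h1 : (∑ V ∈ U.powerset.filter (fun V => V.card = 1), P V) = 3 / (d : ℝ) ^ 4 := by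
    rw [Finset.sum_congr rfl (fun V hV => by
      rw [hP V, (Finset.mem_filter.mp hV).2]), Finset.sum_const,
      ← Finset.powersetCard_eq_filter, Finset.card_powersetCard, hU]
    norm_num; ring
  have key : P U - ((∑ V ∈ U.powerset.filter (fun V => V.card = 2), P V) -
      (∑ V ∈ U.powerset.filter (fun V => V.card = 1), P V)) = 36 / (d : ℝ) ^ 4 := by
    rw [hP U, hU, h2, h1]; field_simp; ring
  exact ⟨key, key ▸ by positivity⟩
end

section
/- Let d ≥ 4 and for every subset U of Fin d define ℙ[U] := (#U)^4 / d^4 (the outcome probability of the d-slit experiment in the theory of density hypercubes). Then for every four-element subset U of Fin d, ℙ[U] − ( Σ_{V ⊆ U, #V = 3} ℙ[V] − Σ_{V ⊆ U, #V = 2} ℙ[V] + Σ_{V ⊆ U, #V = 1} ℙ[V] ) = 24 / d^4; in particular this difference is nonzero, so the theory of density hypercubes exhibits fourth-order interference. -/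
open Finset

lemma sum_P_card_eq (d : ℕ) (P : Finset (Fin d) → ℝ)
    (hP : ∀ U : Finset (Fin d), P U = (U.card : ℝ) ^ 4 / (d : ℝ) ^ 4)
    (U : Finset (Fin d)) (hU : U.card = 4) (k : ℕ) :
    (∑ V ∈ U.powerset.filter (fun V => V.card = k), P V)
      = (Nat.choose 4 k : ℝ) * ((k : ℝ) ^ 4 / (d : ℝ) ^ 4) := by
  have h1 : U.powerset.filter (fun V => V.card = k) = U.powersetCard k := by
    rw [Finset.powersetCard_eq_filter]
  rw [h1]
  rw [Finset.sum_congr rfl (fun V hV => by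
    rw [hP V, (Finset.mem_powersetCard.mp hV).2])]
  rw [Finset.sum_const, Finset.card_powersetCard, hU, nsmul_eq_mul]

/-- For `d ≥ 4` and the probability rule `ℙ[U] = (#U)^4 / d^4` of the theory of
density hypercubes, every four-element subset `U` of `Fin d` witnesses
fourth-order interference: the Sorkin difference equals `24 / d^4 ≠ 0`. -/
theorem density_hypercubes_fourth_order_interference
    (d : ℕ) (hd : 4 ≤ d) (P : Finset (Fin d) → ℝ)
    (hP : ∀ U : Finset (Fin d), P U = (U.card : ℝ) ^ 4 / (d : ℝ) ^ 4)
    (U : Finset (Fin d)) (hU : U.card = 4) :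
    P U - ((∑ V ∈ U.powerset.filter (fun V => V.card = 3), P V) -
            (∑ V ∈ U.powerset.filter (fun V => V.card = 2), P V) +
            (∑ V ∈ U.powerset.filter (fun V => V.card = 1), P V)) = 24 / (d : ℝ) ^ 4
    ∧ P U - ((∑ V ∈ U.powerset.filter (fun V => V.card = 3), P V) -
            (∑ V ∈ U.powerset.filter (fun V => V.card = 2), P V) +
            (∑ V ∈ U.powerset.filter (fun V => V.card = 1), P V)) ≠ 0 := by
  have hd0 : (d : ℝ) ^ 4 ≠ 0 := by positivity
  have hmain : P U - ((∑ V ∈ U.powerset.filter (fun V => V.card = 3), P V) -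
            (∑ V ∈ U.powerset.filter (fun V => V.card = 2), P V) +
            (∑ V ∈ U.powerset.filter (fun V => V.card = 1), P V)) = 24 / (d : ℝ) ^ 4 := by
    rw [hP U, hU, sum_P_card_eq d P hP U hU 3, sum_P_card_eq d P hP U hU 2,
      sum_P_card_eq d P hP U hU 1]
    simp [Nat.choose]
    field_simp
    ring
  refine ⟨hmain, hmain ▸ ?_⟩
  positivity
end

section
/- Let S be a finite set with n := #S ≥ 5. Then Σ_{V ⊆ S} (−1)^{n − #V} · (#V)^4 = 0 (as an integer identity, where the sum ranges over all subsets V of S, the empty set contributing 0). Consequently, for the probability rule ℙ[U] = (#U)^4 / d^4 of the theory of density hypercubes, all Sorkin interference terms of order five and higher vanish: the theory exhibits no interference of order ≥ 5. -/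
open Finset

private def dhΔ (g : ℕ → ℤ) : ℕ → ℤ := fun k => g k - g (k + 1)

private lemma dh_diff {α : Type*} [DecidableEq α] (g : ℕ → ℤ) (a : α) (S : Finset α)
    (ha : a ∉ S) :
    ∑ V ∈ (insert a S).powerset, (-1 : ℤ) ^ V.card * g V.card
      = ∑ V ∈ S.powerset, (-1 : ℤ) ^ V.card * dhΔ g V.card := by
  rw [Finset.sum_powerset_insert ha]
  rw [← Finset.sum_add_distrib]
  refine Finset.sum_congr rfl fun V hV => ?_
  have haV : a ∉ V := fun h => ha (Finset.mem_powerset.mp hV h)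
  rw [Finset.card_insert_of_notMem haV, dhΔ]
  ring

private lemma dh_zero {α : Type*} [DecidableEq α] :
    ∀ (m : ℕ) (g : ℕ → ℤ), (∀ k, (dhΔ^[m] g) k = 0) → ∀ S : Finset α, m ≤ S.card →
      ∑ V ∈ S.powerset, (-1 : ℤ) ^ V.card * g V.card = 0 := by
  intro m
  induction m with
  | zero =>
    intro g hg S _
    simp only [Function.iterate_zero, id] at hg
    simp [hg]
  | succ m ih =>
    intro g hg S hS
    have hne : S.Nonempty := Finset.card_pos.mp (by omega)
    obtain ⟨a, ha⟩ := hne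
    have h1 : S = insert a (S.erase a) := (Finset.insert_erase ha).symm
    rw [h1, dh_diff g a _ (Finset.notMem_erase a S)]
    refine ih (dhΔ g) (fun k => ?_) _ ?_
    · have := hg k
      rwa [Function.iterate_succ_apply] at this
    · have := Finset.card_erase_of_mem ha
      omega

/-- For a finite set `S` with `n = #S ≥ 5`, the alternating sum
`Σ_{V ⊆ S} (−1)^(n − #V) (#V)^4` vanishes; consequently, for the probability rule
`ℙ[U] = (#U)^4 / d^4` of the theory of density hypercubes, the Sorkin interference
term of order `n` (the signed sum over nonempty subsets) vanishes: the theory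
exhibits no interference of order five or higher. -/
theorem density_hypercubes_no_fifth_order_interference
    {α : Type*} [DecidableEq α] (S : Finset α) (hS : 5 ≤ S.card) :
    (∑ V ∈ S.powerset, (-1 : ℤ) ^ (S.card - V.card) * (V.card : ℤ) ^ 4 = 0)
    ∧ ∀ d : ℕ, 1 ≤ d →
        ∑ V ∈ S.powerset.filter (fun V => V.Nonempty),
          (-1 : ℝ) ^ (S.card - V.card) * ((V.card : ℝ) ^ 4 / (d : ℝ) ^ 4) = 0 := by
  have key : ∑ V ∈ S.powerset, (-1 : ℤ) ^ (S.card - V.card) * (V.card : ℤ) ^ 4 = 0 := by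
    have hΔ : ∀ k, (dhΔ^[5] (fun k : ℕ => (k : ℤ) ^ 4)) k = 0 := by
      intro k
      simp only [Function.iterate_succ, Function.iterate_zero, Function.comp_apply, id,
        dhΔ]
      push_cast
      ring
    have h0 := dh_zero 5 (fun k : ℕ => (k : ℤ) ^ 4) hΔ S hS
    have hsign : ∀ V ∈ S.powerset, (-1 : ℤ) ^ (S.card - V.card) * (V.card : ℤ) ^ 4
        = (-1 : ℤ) ^ S.card * ((-1 : ℤ) ^ V.card * (V.card : ℤ) ^ 4) := by
      intro V hV
      have hle : V.card ≤ S.card := Finset.card_le_card (Finset.mem_powerset.mp hV)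
      have : (-1 : ℤ) ^ (S.card - V.card) = (-1 : ℤ) ^ S.card * (-1 : ℤ) ^ V.card := by
        have h2 : S.card - V.card + 2 * V.card = S.card + V.card := by omega
        have := congrArg (fun n => (-1 : ℤ) ^ n) h2
        simp only [pow_add, pow_mul] at this
        simp only [neg_one_sq, one_pow, mul_one] at this
        exact this
      rw [this]; ring
    rw [Finset.sum_congr rfl hsign, ← Finset.mul_sum, h0, mul_zero]
  refine ⟨key, fun d hd => ?_⟩
  have hfull : ∑ V ∈ S.powerset.filter (fun V => V.Nonempty),
      (-1 : ℝ) ^ (S.card - V.card) * ((V.card : ℝ) ^ 4 / (d : ℝ) ^ 4)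
      = ∑ V ∈ S.powerset, (-1 : ℝ) ^ (S.card - V.card) * ((V.card : ℝ) ^ 4 / (d : ℝ) ^ 4) := by
    refine Finset.sum_filter_of_ne fun V _ h => ?_
    rcases V.eq_empty_or_nonempty with rfl | hne
    · simp at h
    · exact hne
  rw [hfull]
  have : ∑ V ∈ S.powerset, (-1 : ℝ) ^ (S.card - V.card) * ((V.card : ℝ) ^ 4 / (d : ℝ) ^ 4)
      = ((∑ V ∈ S.powerset, (-1 : ℤ) ^ (S.card - V.card) * (V.card : ℤ) ^ 4 : ℤ) : ℝ)
        / (d : ℝ) ^ 4 := by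
    rw [Int.cast_sum, Finset.sum_div]
    refine Finset.sum_congr rfl fun V _ => ?_
    push_cast
    ring
  rw [this, key]
  simp
end
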